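/- Derivation of the boost: let L : ℝ⁴ → ℝ⁴ be linear, preserve the Minkowski quadratic form, fix e₃ and e₄, map the span of e₁ and e₂ to itself, and satisfy (Le₁)₁ > 0 and (Le₂)₂ > 0. Then there exists v ∈ (−1, 1) such that L is the standard boost L = L(v): Le₁ = (γ, γv, 0, 0) and Le₂ = (γv, γ, 0, 0) with γ = 1/√(1−v²). -/
import Mathlib


/-- The Minkowski quadratic form on ℝ⁴. -/
def Q (x : Fin 4 → ℝ) : ℝ := x 0 ^ 2 - x 1 ^ 2 - x 2 ^ 2 - x 3 ^ 2

set_option maxHeartbeats 1000000 in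
/-- Derivation of the boost: a Lorentz transformation fixing e₃ and e₄,
preserving the (x₁,x₂)-plane, with positive diagonal orientation conditions,
is a standard boost `L(v)` for some `v ∈ (−1,1)`. -/
theorem lorentz_is_boost
    (L : (Fin 4 → ℝ) →ₗ[ℝ] (Fin 4 → ℝ)) (hL : ∀ x, Q (L x) = Q x)
    (he₃ : L ![0, 0, 1, 0] = ![0, 0, 1, 0])
    (he₄ : L ![0, 0, 0, 1] = ![0, 0, 0, 1])
    (hplane : ∀ x ∈ Submodule.span ℝ {(![1, 0, 0, 0] : Fin 4 → ℝ), ![0, 1, 0, 0]},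
      L x ∈ Submodule.span ℝ {(![1, 0, 0, 0] : Fin 4 → ℝ), ![0, 1, 0, 0]})
    (h₁ : 0 < (L ![1, 0, 0, 0]) 0) (h₂ : 0 < (L ![0, 1, 0, 0]) 1) :
    ∃ v ∈ Set.Ioo (-1 : ℝ) 1,
      L ![1, 0, 0, 0] =
        ![1 / Real.sqrt (1 - v ^ 2), v / Real.sqrt (1 - v ^ 2), 0, 0] ∧
      L ![0, 1, 0, 0] =
        ![v / Real.sqrt (1 - v ^ 2), 1 / Real.sqrt (1 - v ^ 2), 0, 0] := by
  -- Extract the components of L e₁ and L e₂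
  obtain ⟨a, b, hab⟩ := Submodule.mem_span_pair.mp
    (hplane ![1,0,0,0] (Submodule.subset_span (Set.mem_insert _ _)))
  obtain ⟨c, d, hcd⟩ := Submodule.mem_span_pair.mp
    (hplane ![0,1,0,0] (Submodule.subset_span (Set.mem_insert_of_mem _ rfl)))
  have hLe1 : L ![1,0,0,0] = ![a, b, 0, 0] := by
    rw [← hab]; funext i; fin_cases i <;> simp
  have hLe2 : L ![0,1,0,0] = ![c, d, 0, 0] := by
    rw [← hcd]; funext i; fin_cases i <;> simp
  have ha : 0 < a := by rwa [hLe1] at h₁; 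
  have hd : 0 < d := by rwa [hLe2] at h₂
  have q1 : a ^ 2 - b ^ 2 = 1 := by
    have := hL ![1,0,0,0]; rw [hLe1] at this; simpa [Q] using this
  have q2 : c ^ 2 - d ^ 2 = -1 := by
    have := hL ![0,1,0,0]; rw [hLe2] at this
    simp [Q] at this; linarith
  have q3 : a * c = b * d := by
    have hsum : L (![1,0,0,0] + ![0,1,0,0]) = ![a + c, b + d, 0, 0] := by
      rw [map_add, hLe1, hLe2]; funext i; fin_cases i <;> simp
    have := hL (![1,0,0,0] + ![0,1,0,0])
    rw [hsum] at this
    simp [Q] at this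
    nlinarith [this]
  have q3' : (a*c)^2 = (b*d)^2 := by rw [q3]
  have hc2b2 : c ^ 2 = b ^ 2 := by nlinarith [q3', q1, q2]
  have had : a = d := by nlinarith
  have hcb : c = b := by
    have hmul : (c - b) * (c + b) = 0 := by nlinarith
    rcases mul_eq_zero.mp hmul with h | h
    · linarith
    · -- c = -b forces b = 0
      have hb : b = 0 := by nlinarith
      nlinarith
  rw [hcb, ← had] at hLe2
  have hblt : b < a := by nlinarith
  have hbgt : -a < b := by nlinarith
  clear hL hplane hab hcd he₃ he₄ h₁ h₂ q3'
  refine ⟨b / a, ⟨?_, ?_⟩, ?_, ?_⟩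
  · rw [lt_div_iff₀ ha]; linarith
  · rw [div_lt_one ha]; linarith
  · rw [hLe1]
    have hs : Real.sqrt (1 - (b / a) ^ 2) = 1 / a := by
      have h1v : 1 - (b / a) ^ 2 = (1 / a) ^ 2 := by
        field_simp; nlinarith
      rw [h1v, Real.sqrt_sq (by positivity)]
    rw [hs]; funext i; fin_cases i <;> simp <;> field_simp
  · rw [hLe2]
    have hs : Real.sqrt (1 - (b / a) ^ 2) = 1 / a := by
      have h1v : 1 - (b / a) ^ 2 = (1 / a) ^ 2 := by
        field_simp; nlinarith
      rw [h1v, Real.sqrt_sq (by positivity)]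
    rw [hs]; funext i; fin_cases i <;> simp <;> field_simp
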